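/- arXiv:1608.05489 — 2 statements merged into one kernel-verified Lean document; each statement's English description precedes it below -/
import Mathlib

section
/- If X is an order continuous Banach lattice and every un-null sequence in X is norm bounded, then X is finite-dimensional. -/
open Filter Topology

/-- A net `f` un-converges to `x` if `‖|f i - x| ⊓ u‖ → 0` for every `u ≥ 0`. -/
def UnTendsto {ι X : Type*} [NormedAddCommGroup X] [Lattice X] [HasSolidNorm X] [IsOrderedAddMonoid X]
    (f : ι → X) (l : Filter ι) (x : X) : Prop :=
  ∀ u : X, 0 ≤ u → Tendsto (fun i => ‖|f i - x| ⊓ u‖) l (𝓝 0)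

universe u

/-!
An order continuous norm makes every increasing, order bounded sequence norm Cauchy: the net
`(n, b) ↦ b - xₙ`, with `b` running down the upper bounds, decreases to `0`. Hence a positive
disjoint sequence below some `u` is norm null (its partial sums increase below `u`), and so every
positive disjoint sequence is un-null. Rescaled to norms `n + 1`, a disjoint sequence of nonzero
positive elements would be un-null and unbounded; so there is none.

A normed lattice without such a sequence is finite-dimensional. Below every nonzero `x ≥ 0` lies
an atom (otherwise splitting `x` again and again produces one), the order interval `[0, a]` of an
atom is `ℝ₊ • a`, and a maximal disjoint family of atoms is finite and spans: what is left of
`x ≥ 0` after subtracting its largest multiples of these atoms is disjoint from all of them.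
-/

open Set

lemma inf_eq_zero_of_le_of_le {α : Type*} [Lattice α] [Zero α] {a b a' b' : α} (ha : 0 ≤ a)
    (hb : 0 ≤ b) (haa' : a ≤ a') (hbb' : b ≤ b') (h : a' ⊓ b' = 0) : a ⊓ b = 0 :=
  le_antisymm (h ▸ inf_le_inf haa' hbb') (le_inf ha hb)

section LatticeOrderedGroup

variable {α : Type*} [AddCommGroup α] [Lattice α] [IsOrderedAddMonoid α]

lemma add_inf_eq_zero {a b c : α} (ha : 0 ≤ a) (hb : 0 ≤ b) (hc : 0 ≤ c) (hac : a ⊓ c = 0)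
    (hbc : b ⊓ c = 0) : (a + b) ⊓ c = 0 := by
  refine le_antisymm ?_ (le_inf (add_nonneg ha hb) hc)
  calc (a + b) ⊓ c ≤ (a + b) ⊓ (a + c) ⊓ ((c + b) ⊓ (c + c)) :=
        le_inf (le_inf inf_le_left (inf_le_right.trans (le_add_of_nonneg_left ha)))
          (le_inf (inf_le_right.trans (le_add_of_nonneg_right hb))
            (inf_le_right.trans (le_add_of_nonneg_left hc)))
    _ = a ⊓ c + b ⊓ c := by rw [inf_add, add_inf, add_inf]
    _ = 0 := by rw [hac, hbc, add_zero]

lemma nsmul_inf_eq_zero {a b : α} (ha : 0 ≤ a) (hb : 0 ≤ b) (hab : a ⊓ b = 0) (n : ℕ) :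
    (n • a) ⊓ b = 0 := by
  induction n with
  | zero => simpa using hb
  | succ n ih => rw [succ_nsmul]; exact add_inf_eq_zero (nsmul_nonneg ha n) ha hb ih hab

lemma nonneg_of_nsmul_nonneg {n : ℕ} (hn : n ≠ 0) {v : α} (h : 0 ≤ n • v) : 0 ≤ v := by
  have hpos : n • v⁻ ≤ n • v⁺ := by rwa [← sub_nonneg, ← nsmul_sub, posPart_sub_negPart]
  have hle : v⁻ ≤ n • v⁻ := le_self_nsmul (negPart_nonneg v) hn
  have hdisj := nsmul_inf_eq_zero (posPart_nonneg v) (negPart_nonneg v)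
    (posPart_inf_negPart_eq_zero v) n
  refine negPart_eq_zero.1 (le_antisymm ?_ (negPart_nonneg v))
  exact hdisj ▸ le_inf (hle.trans hpos) le_rfl

lemma Finset.sum_inf_eq_zero {ι : Type*} {s : Finset ι} {f : ι → α} {c : α} (hc : 0 ≤ c)
    (hf : ∀ i ∈ s, 0 ≤ f i) (hfc : ∀ i ∈ s, f i ⊓ c = 0) : (∑ i ∈ s, f i) ⊓ c = 0 :=
  (Finset.sum_induction f (fun y => 0 ≤ y ∧ y ⊓ c = 0)
    (fun _ _ hx hy => ⟨add_nonneg hx.1 hy.1, add_inf_eq_zero hx.1 hy.1 hc hx.2 hy.2⟩)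
    ⟨le_rfl, inf_of_le_left hc⟩ fun i hi => ⟨hf i hi, hfc i hi⟩).2

lemma Finset.sum_le_of_pairwise_inf_eq_zero {ι : Type*} {s : Finset ι} {f : ι → α} {u : α}
    (hu : 0 ≤ u) (hf : ∀ i ∈ s, 0 ≤ f i) (hfu : ∀ i ∈ s, f i ≤ u)
    (hd : (s : Set ι).Pairwise fun i j => f i ⊓ f j = 0) : ∑ i ∈ s, f i ≤ u := by
  classical
  induction s using Finset.induction_on with
  | empty => simpa using hu
  | insert i s hi ih =>
    have hdisj : (∑ j ∈ s, f j) ⊓ f i = 0 :=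
      Finset.sum_inf_eq_zero (hf i (mem_insert_self i s))
        (fun j hj => hf j (mem_insert_of_mem hj)) fun j hj =>
          hd (mem_insert_of_mem hj) (mem_insert_self i s) (ne_of_mem_of_not_mem hj hi)
    rw [Finset.sum_insert hi, ← inf_add_sup, inf_comm, hdisj, zero_add]
    exact sup_le (hfu i (mem_insert_self i s)) (ih (fun j hj => hf j (mem_insert_of_mem hj))
      (fun j hj => hfu j (mem_insert_of_mem hj)) (hd.mono (by simp)))

end LatticeOrderedGroup

section SolidNorm

variable {E : Type*} [NormedAddCommGroup E] [Lattice E] [HasSolidNorm E] [IsOrderedAddMonoid E]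

lemma norm_le_norm_of_nonneg_of_le {a b : E} (ha : 0 ≤ a) (hab : a ≤ b) : ‖a‖ ≤ ‖b‖ :=
  norm_le_norm_of_abs_le_abs (by rwa [abs_of_nonneg ha, abs_of_nonneg (ha.trans hab)])

variable [NormedSpace ℝ E]

instance HasSolidNorm.isOrderedModule : IsOrderedModule ℝ E :=
  .of_smul_nonneg fun c hc a ha => by
    have hrat : ∀ q : ℚ, 0 ≤ q → 0 ≤ (q : ℝ) • a := fun q hq => by
      refine nonneg_of_nsmul_nonneg q.den_ne_zero ?_
      have hden : (q.den : ℝ) * q = q.num := by exact_mod_cast q.den_mul_eq_num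
      rw [← Nat.cast_smul_eq_nsmul ℝ, smul_smul, hden, Int.cast_smul_eq_zsmul]
      exact zsmul_nonneg ha (Rat.num_nonneg.2 hq)
    -- `max r 0` turns "nonnegative on the nonnegative rationals" into a closed condition on `ℝ`
    have key : ∀ r : ℝ, 0 ≤ max r 0 • a := fun r =>
      Rat.denseRange_cast.induction_on r (isClosed_le continuous_const (by fun_prop)) fun q => by
        simpa using hrat _ (le_max_right q 0)
    simpa [hc] using key c

lemma eq_zero_of_forall_natCast_smul_le {a b : E} (ha : 0 ≤ a) (h : ∀ n : ℕ, (n : ℝ) • a ≤ b) :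
    a = 0 := by
  by_contra hne
  obtain ⟨n, hn⟩ := exists_nat_gt (‖b‖ / ‖a‖)
  have hnorm := norm_le_norm_of_nonneg_of_le (smul_nonneg n.cast_nonneg ha) (h n)
  rw [norm_smul, Real.norm_natCast] at hnorm
  rw [div_lt_iff₀ (norm_pos_iff.2 hne)] at hn
  linarith

lemma smul_inf_smul_eq_zero {a b : E} (ha : 0 ≤ a) (hb : 0 ≤ b) (hab : a ⊓ b = 0) {c d : ℝ}
    (hc : 0 ≤ c) (hd : 0 ≤ d) : (c • a) ⊓ (d • b) = 0 := by
  obtain ⟨n, hn⟩ := exists_nat_ge (max c d)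
  have hle : ∀ {e : ℝ} {x : E}, e ≤ n → 0 ≤ x → e • x ≤ n • x := fun hen hx => by
    rw [← Nat.cast_smul_eq_nsmul ℝ]; exact smul_le_smul_of_nonneg_right hen hx
  refine inf_eq_zero_of_le_of_le (smul_nonneg hc ha) (smul_nonneg hd hb)
    (hle ((le_max_left c d).trans hn) ha) (hle ((le_max_right c d).trans hn) hb) ?_
  have hna := nsmul_inf_eq_zero ha hb hab n
  rw [inf_comm] at hna ⊢
  exact nsmul_inf_eq_zero hb (nsmul_nonneg ha n) hna n

instance {α : Type*} [Lattice α] (s : Set α) : SemilatticeInf (upperBounds s) :=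
  Subtype.semilatticeInf fun _ _ ha hb _ hx => le_inf (ha hx) (hb hx)

lemma isGLB_range_upperBounds_sub {x : ℕ → E} (hbdd : BddAbove (range x)) :
    IsGLB (range fun i : ℕ × (upperBounds (range x))ᵒᵈ => (OrderDual.ofDual i.2).1 - x i.1) 0 := by
  obtain ⟨u, hu⟩ := hbdd
  refine ⟨?_, fun v hv => ?_⟩
  · rintro _ ⟨⟨n, b⟩, rfl⟩
    exact sub_nonneg.2 ((OrderDual.ofDual b).2 (mem_range_self n))
  have hv' : ∀ b ∈ upperBounds (range x), ∀ n, v ≤ b - x n := fun b hb n =>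
    hv ⟨(n, OrderDual.toDual ⟨b, hb⟩), rfl⟩
  -- if `b` is an upper bound then so is `(b - v) ⊓ b = b - v⁺`
  have hstep : ∀ k : ℕ, u - (k : ℝ) • v⁺ ∈ upperBounds (range x) := by
    intro k
    induction k with
    | zero => simpa using hu
    | succ k ih =>
      rintro _ ⟨n, rfl⟩
      calc x n ≤ (u - (k : ℝ) • v⁺ - v) ⊓ (u - (k : ℝ) • v⁺) :=
            le_inf (le_sub_comm.1 (hv' _ ih n)) (ih (mem_range_self n))
        _ = u - ((k + 1 : ℕ) : ℝ) • v⁺ := by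
          rw [posPart_def, Nat.cast_succ, add_smul, one_smul, ← sub_sub, sub_sup, sub_zero]
  exact posPart_eq_zero.1 (eq_zero_of_forall_natCast_smul_le (posPart_nonneg v) fun k =>
    le_sub_comm.1 (hstep k (mem_range_self 0)))

end SolidNorm

def IsOrderContinuousNorm (X : Type u) [NormedAddCommGroup X] [Lattice X] : Prop :=
  ∀ (ι : Type u) [SemilatticeSup ι] [Nonempty ι] (f : ι → X),
    Antitone f → IsGLB (Set.range f) 0 → Tendsto (fun i => ‖f i‖) atTop (𝓝 0)

namespace IsOrderContinuousNorm

variable {X : Type u} [NormedAddCommGroup X] [Lattice X] [HasSolidNorm X] [IsOrderedAddMonoid X]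
  [NormedSpace ℝ X]

lemma cauchySeq_of_monotone (hoc : IsOrderContinuousNorm X) {x : ℕ → X} (hx : Monotone x)
    (hbdd : BddAbove (range x)) : CauchySeq x := by
  have : Nonempty (upperBounds (range x)) := hbdd.to_subtype
  have hanti : Antitone fun i : ℕ × (upperBounds (range x))ᵒᵈ =>
      (OrderDual.ofDual i.2).1 - x i.1 := fun i j hij => sub_le_sub hij.2 (hx hij.1)
  have hlim := hoc _ _ hanti (isGLB_range_upperBounds_sub hbdd)
  refine Metric.cauchySeq_iff'.2 fun ε hε => ?_
  obtain ⟨⟨N, b⟩, hNb⟩ := eventually_atTop.1 (hlim.eventually (gt_mem_nhds hε))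
  refine ⟨N, fun n hn => ?_⟩
  rw [dist_eq_norm]
  refine (norm_le_norm_of_nonneg_of_le (sub_nonneg.2 (hx hn)) ?_).trans_lt (hNb (N, b) le_rfl)
  exact sub_le_sub_right ((OrderDual.ofDual b).2 (mem_range_self n)) _

lemma tendsto_zero_of_pairwise_inf_eq_zero (hoc : IsOrderContinuousNorm X) {y : ℕ → X} {u : X}
    (hy : ∀ n, 0 ≤ y n) (hyu : ∀ n, y n ≤ u)
    (hd : Pairwise fun m n => y m ⊓ y n = 0) : Tendsto y atTop (𝓝 0) := by
  set S : ℕ → X := fun n => ∑ k ∈ Finset.range n, y k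
  have hS : CauchySeq S := hoc.cauchySeq_of_monotone
    (monotone_nat_of_le_succ fun n => by simp [S, Finset.sum_range_succ, hy n])
    ⟨u, forall_mem_range.2 fun n => Finset.sum_le_of_pairwise_inf_eq_zero ((hy 0).trans (hyu 0)) (fun k _ => hy k)
      (fun k _ => hyu k) (hd.set_pairwise _)⟩
  have hsucc : Tendsto (fun n : ℕ => (n + 1, n)) atTop atTop := by
    rw [← prod_atTop_atTop_eq]; exact (tendsto_add_atTop_nat 1).prodMk tendsto_id
  have := (cauchySeq_iff_tendsto_dist_atTop_0.1 hS).comp hsucc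
  rw [tendsto_zero_iff_norm_tendsto_zero]
  simpa [Function.comp_def, dist_eq_norm, S, Finset.sum_range_succ] using this

lemma unTendsto_zero_of_pairwise_inf_eq_zero (hoc : IsOrderContinuousNorm X) {x : ℕ → X}
    (hx : ∀ n, 0 ≤ x n) (hd : Pairwise fun m n => x m ⊓ x n = 0) : UnTendsto x atTop 0 :=
  fun u hu => by
    have := hoc.tendsto_zero_of_pairwise_inf_eq_zero (fun n => le_inf (hx n) hu)
      (fun n => inf_le_right) fun m n hmn => inf_eq_zero_of_le_of_le (le_inf (hx m) hu)
        (le_inf (hx n) hu) inf_le_left inf_le_left (hd hmn)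
    simpa [abs_of_nonneg (hx _)] using tendsto_zero_iff_norm_tendsto_zero.1 this

lemma not_exists_pos_pairwise_inf_eq_zero (hoc : IsOrderContinuousNorm X)
    (hb : ∀ x : ℕ → X, UnTendsto x atTop 0 → ∃ C : ℝ, ∀ n, ‖x n‖ ≤ C) :
    ¬ ∃ d : ℕ → X, (∀ n, 0 < d n) ∧ Pairwise fun m n => d m ⊓ d n = 0 := by
  rintro ⟨d, hd0, hd⟩
  have hnorm : ∀ n, 0 < ‖d n‖ := fun n => norm_pos_iff.2 (hd0 n).ne'
  set c : ℕ → ℝ := fun n => (n + 1) / ‖d n‖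
  have hc : ∀ n, 0 ≤ c n := fun n => by positivity
  obtain ⟨C, hC⟩ := hb (fun n => c n • d n) (hoc.unTendsto_zero_of_pairwise_inf_eq_zero
    (fun n => smul_nonneg (hc n) (hd0 n).le) fun m n hmn =>
      smul_inf_smul_eq_zero (hd0 m).le (hd0 n).le (hd hmn) (hc m) (hc n))
  obtain ⟨n, hn⟩ := exists_nat_gt C
  have hcn : ‖c n • d n‖ = n + 1 := by
    rw [norm_smul, Real.norm_of_nonneg (hc n), div_mul_cancel₀ _ (hnorm n).ne']
  linarith [hC n]

end IsOrderContinuousNorm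

section Atoms

variable {α : Type*} [Lattice α] [Zero α]

def IsRieszAtom (a : α) : Prop :=
  0 < a ∧ ∀ v w, 0 ≤ v → 0 ≤ w → v ≤ a → w ≤ a → v ⊓ w = 0 → v = 0 ∨ w = 0

lemma Set.finite_of_not_exists_pos_pairwise_inf_eq_zero
    (h : ¬ ∃ d : ℕ → α, (∀ n, 0 < d n) ∧ Pairwise fun m n => d m ⊓ d n = 0) {M : Set α}
    (hM : ∀ a ∈ M, 0 < a) (hd : M.Pairwise fun a b => a ⊓ b = 0) : M.Finite := by
  by_contra hinf
  let e := Set.Infinite.natEmbedding M hinf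
  exact h ⟨fun n => e n, fun n => hM _ (e n).2, fun m n hmn =>
    hd (e m).2 (e n).2 fun heq => hmn (e.injective (Subtype.ext heq))⟩

lemma exists_isRieszAtom_le
    (h : ¬ ∃ d : ℕ → α, (∀ n, 0 < d n) ∧ Pairwise fun m n => d m ⊓ d n = 0) {x : α}
    (hx : 0 < x) : ∃ a, IsRieszAtom a ∧ a ≤ x := by
  by_contra! hno
  have hsplit : ∀ b, 0 < b → b ≤ x → ∃ v w : α, 0 < v ∧ 0 < w ∧ v ≤ b ∧ w ≤ b ∧ v ⊓ w = 0 := by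
    intro b hb hbx
    have : ¬ IsRieszAtom b := fun hat => hno b hat hbx
    simp only [IsRieszAtom, hb, true_and, not_forall, not_or] at this
    obtain ⟨v, w, hv, hw, hvb, hwb, hvw, hv0, hw0⟩ := this
    exact ⟨v, w, hv.lt_of_ne' hv0, hw.lt_of_ne' hw0, hvb, hwb, hvw⟩
  choose! v w hv hw hvb hwb hvw using hsplit
  -- peel off `v` and keep splitting `w`
  set b : ℕ → α := fun n => w^[n] x
  have hb : ∀ n, 0 < b n ∧ b n ≤ x := by
    intro n
    induction n with
    | zero => exact ⟨hx, le_rfl⟩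
    | succ n ih =>
      simp only [b, Function.iterate_succ_apply']
      exact ⟨hw _ ih.1 ih.2, (hwb _ ih.1 ih.2).trans ih.2⟩
  have hanti : Antitone b := antitone_nat_of_succ_le fun n => by
    simp only [b, Function.iterate_succ_apply']; exact hwb _ (hb n).1 (hb n).2
  have hdisj : ∀ m n, m < n → v (b m) ⊓ v (b n) = 0 := fun m n hmn =>
    inf_eq_zero_of_le_of_le (hv _ (hb m).1 (hb m).2).le (hv _ (hb n).1 (hb n).2).le le_rfl
      ((hvb _ (hb n).1 (hb n).2).trans (hanti hmn))
      (by simpa only [b, Function.iterate_succ_apply'] using hvw _ (hb m).1 (hb m).2)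
  refine h ⟨fun n => v (b n), fun n => hv _ (hb n).1 (hb n).2, fun m n hmn => ?_⟩
  rcases hmn.lt_or_gt with hlt | hlt
  · exact hdisj m n hlt
  · rw [inf_comm]; exact hdisj n m hlt

end Atoms

section NormedAtoms

variable {E : Type*} [NormedAddCommGroup E] [Lattice E] [HasSolidNorm E] [IsOrderedAddMonoid E]
  [NormedSpace ℝ E]

lemma exists_isGreatest_smul_le {a x : E} (ha : 0 < a) (hx : 0 ≤ x) :
    ∃ t, IsGreatest {s : ℝ | s • a ≤ x} t := by
  have hclosed : IsClosed {s : ℝ | s • a ≤ x} := isClosed_le (by fun_prop) continuous_const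
  have hbdd : BddAbove {s : ℝ | s • a ≤ x} := by
    refine ⟨‖x‖ / ‖a‖, fun s hs => ?_⟩
    rcases le_or_gt s 0 with hs0 | hs0
    · exact hs0.trans (by positivity)
    · rw [le_div_iff₀ (norm_pos_iff.2 ha.ne')]
      simpa [norm_smul, abs_of_pos hs0] using
        norm_le_norm_of_nonneg_of_le (smul_nonneg hs0.le ha.le) hs
  exact ⟨_, hclosed.isGreatest_csSup ⟨0, by simpa using hx⟩ hbdd⟩

lemma IsRieszAtom.exists_eq_smul {a y : E} (ha : IsRieszAtom a) (hy : 0 ≤ y) (hya : y ≤ a) :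
    ∃ s : ℝ, y = s • a := by
  obtain ⟨t, ht, htmax⟩ := exists_isGreatest_smul_le ha.1 hy
  have ht0 : 0 ≤ t := htmax (by simpa using hy)
  set z := y - t • a
  have hz : 0 ≤ z := sub_nonneg.2 ht
  have hza : z ≤ a := (sub_le_self _ (smul_nonneg ht0 ha.1.le)).trans hya
  -- split `z - ε • a` into its disjoint parts; the atom kills one, maximality of `t` the other
  have hsmall : ∀ ε : ℝ, 0 < ε → ε ≤ 1 → z ≤ ε • a := by
    intro ε hε hε1
    have hεa : ε • a ≤ a := by simpa using smul_le_smul_of_nonneg_right hε1 ha.1.le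
    have hpos : (z - ε • a)⁺ ≤ a :=
      sup_le ((sub_le_self _ (smul_nonneg hε.le ha.1.le)).trans hza) ha.1.le
    have hneg : (z - ε • a)⁻ ≤ a :=
      sup_le (by rw [neg_sub]; exact (sub_le_self _ hz).trans hεa) ha.1.le
    rcases ha.2 _ _ (posPart_nonneg _) (negPart_nonneg _) hpos hneg
      (posPart_inf_negPart_eq_zero _) with h | h
    · exact sub_nonpos.1 (posPart_eq_zero.1 h)
    · have hmem : (t + ε) • a ≤ y := by
        rw [add_smul]
        calc t • a + ε • a ≤ t • a + z := add_le_add le_rfl (sub_nonneg.1 (negPart_eq_zero.1 h))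
          _ = y := add_sub_cancel _ _
      linarith [htmax hmem]
  have hz0 : z = 0 := eq_zero_of_forall_natCast_smul_le (b := a) hz fun n => by
    rcases n.eq_zero_or_pos with rfl | hn
    · simpa using ha.1.le
    · have hn' : (1 : ℝ) ≤ n := by exact_mod_cast hn
      exact (le_inv_smul_iff_of_pos (by positivity)).1
        (hsmall _ (by positivity) (inv_le_one_of_one_le₀ hn'))
  exact ⟨t, sub_eq_zero.1 hz0⟩

lemma exists_sub_mem_span_forall_inf_eq_zero {F : Finset E} (hF : ∀ a ∈ F, IsRieszAtom a)
    (hd : (F : Set E).Pairwise fun a b => a ⊓ b = 0) {x : E} (hx : 0 ≤ x) :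
    ∃ r, 0 ≤ r ∧ x - r ∈ Submodule.span ℝ (F : Set E) ∧ ∀ a ∈ F, r ⊓ a = 0 := by
  choose! t ht using fun a (ha : a ∈ F) => exists_isGreatest_smul_le (hF a ha).1 hx
  have ht0 : ∀ a ∈ F, 0 ≤ t a := fun a ha => (ht a ha).2 (by simpa using hx)
  have hg0 : ∀ a ∈ F, 0 ≤ t a • a := fun a ha => smul_nonneg (ht0 a ha) (hF a ha).1.le
  have hsum : ∑ a ∈ F, t a • a ≤ x :=
    Finset.sum_le_of_pairwise_inf_eq_zero hx hg0 (fun a ha => (ht a ha).1) fun a ha b hb hab =>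
      smul_inf_smul_eq_zero (hF a ha).1.le (hF b hb).1.le (hd ha hb hab) (ht0 a ha) (ht0 b hb)
  set r := x - ∑ b ∈ F, t b • b
  have hr : 0 ≤ r := sub_nonneg.2 hsum
  refine ⟨r, hr, ?_, fun a ha => ?_⟩
  · rw [sub_sub_cancel]
    exact Submodule.sum_mem _ fun a ha => Submodule.smul_mem _ _ (Submodule.subset_span ha)
  -- `r ⊓ a = s • a`, and maximality of `t a` forces `s ≤ 0`
  obtain ⟨s, hs⟩ := (hF a ha).exists_eq_smul (le_inf hr (hF a ha).1.le) inf_le_right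
  have hmem : (t a + s) • a ≤ x :=
    calc (t a + s) • a = t a • a + r ⊓ a := by rw [add_smul, hs]
      _ ≤ ∑ b ∈ F, t b • b + r := add_le_add (Finset.single_le_sum hg0 ha) inf_le_left
      _ = x := add_sub_cancel _ _
  have hs0 : s ≤ 0 := by linarith [(ht a ha).2 hmem]
  exact le_antisymm (hs ▸ smul_nonpos_of_nonpos_of_nonneg hs0 (hF a ha).1.le)
    (le_inf hr (hF a ha).1.le)

theorem finiteDimensional_of_not_exists_pos_pairwise_inf_eq_zero
    (h : ¬ ∃ d : ℕ → E, (∀ n, 0 < d n) ∧ Pairwise fun m n => d m ⊓ d n = 0) :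
    FiniteDimensional ℝ E := by
  obtain ⟨M, hM⟩ : ∃ M : Set E,
      Maximal (fun A : Set E => (∀ a ∈ A, IsRieszAtom a) ∧ A.Pairwise fun a b => a ⊓ b = 0) M :=
    zorn_subset _ fun c hc hchain => ⟨⋃₀ c, ⟨fun a ⟨A, hA, haA⟩ => (hc hA).1 a haA,
      hchain.pairwise_sUnion.2 fun A hA => (hc hA).2⟩, fun A hA => subset_sUnion_of_mem hA⟩
  obtain ⟨hMatom, hMd⟩ := hM.prop
  have hfin : M.Finite :=
    Set.finite_of_not_exists_pos_pairwise_inf_eq_zero h (fun a ha => (hMatom a ha).1) hMd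
  have hpos : ∀ x : E, 0 ≤ x → x ∈ Submodule.span ℝ M := by
    intro x hx
    obtain ⟨r, hr, hxr, hrM⟩ := exists_sub_mem_span_forall_inf_eq_zero (F := hfin.toFinset)
      (by simpa using hMatom) (by simpa using hMd) hx
    rw [hfin.coe_toFinset] at hxr
    obtain rfl | hr := hr.eq_or_lt
    · simpa using hxr
    -- an atom below the remainder could be added to `M`
    obtain ⟨b, hb, hbr⟩ := exists_isRieszAtom_le h hr
    have hbM : ∀ a ∈ M, b ⊓ a = 0 := fun a ha =>
      inf_eq_zero_of_le_of_le hb.1.le (hMatom a ha).1.le hbr le_rfl (hrM a (by simpa using ha))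
    have hbb := hbM b (hM.mem_of_prop_insert ⟨forall_mem_insert.2 ⟨hb, hMatom⟩,
      hMd.insert fun a ha _ => ⟨hbM a ha, inf_comm a b ▸ hbM a ha⟩⟩)
    exact absurd (inf_idem b ▸ hbb) hb.1.ne'
  have htop : Submodule.span ℝ M = ⊤ := Submodule.eq_top_iff'.2 fun x => by
    simpa using sub_mem (hpos _ (posPart_nonneg x)) (hpos _ (negPart_nonneg x))
  exact ⟨⟨hfin.toFinset, by rw [hfin.coe_toFinset, htop]⟩⟩

end NormedAtoms

theorem finiteDimensional_of_unNull_bounded_general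
    {X : Type u} [NormedAddCommGroup X] [Lattice X] [HasSolidNorm X] [IsOrderedAddMonoid X] [NormedSpace ℝ X]
    (hoc : ∀ (ι : Type u) [SemilatticeSup ι] [Nonempty ι] (f : ι → X),
      Antitone f → IsGLB (Set.range f) 0 → Tendsto (fun i => ‖f i‖) atTop (𝓝 0))
    (hb : ∀ x : ℕ → X, UnTendsto x atTop 0 → ∃ C : ℝ, ∀ n, ‖x n‖ ≤ C) :
    FiniteDimensional ℝ X :=
  finiteDimensional_of_not_exists_pos_pairwise_inf_eq_zero
    (IsOrderContinuousNorm.not_exists_pos_pairwise_inf_eq_zero hoc hb)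

/-- If `X` is an order continuous Banach lattice in which every un-null sequence
is norm bounded, then `X` is finite-dimensional. -/
theorem finiteDimensional_of_unNull_bounded
    {X : Type u} [NormedAddCommGroup X] [Lattice X] [HasSolidNorm X] [IsOrderedAddMonoid X] [NormedSpace ℝ X] [CompleteSpace X]
    (hoc : ∀ (ι : Type u) [SemilatticeSup ι] [Nonempty ι] (f : ι → X),
      Antitone f → IsGLB (Set.range f) 0 → Tendsto (fun i => ‖f i‖) atTop (𝓝 0))
    (hb : ∀ x : ℕ → X, UnTendsto x atTop 0 → ∃ C : ℝ, ∀ n, ‖x n‖ ≤ C) :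
    FiniteDimensional ℝ X :=
  finiteDimensional_of_unNull_bounded_general hoc hb
end

section
/- Let Y be a projection band in a normed lattice X and (y_α) a net in Y un-converging to 0 in Y. Then y_α un-converges to 0 in X. -/
open Filter Topology

/-!
Decompose `u ≥ 0` as `u = v + z` with `v ∈ Y` and `z ⊥ Y`. For `a ≥ 0` the Riesz-type inequality
`a ⊓ (b + c) ≤ a ⊓ b + a ⊓ c` gives `|y i| ⊓ u ≤ |y i| ⊓ v⁺ + |y i| ⊓ z⁺`, and the last term
vanishes because `y i ∈ Y` is disjoint from `z`. Since `v⁺ ∈ Y` by solidity, the solid norm bounds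
`‖|y i| ⊓ u‖` by `‖|y i| ⊓ v⁺‖`, which tends to `0` by hypothesis.
-/

section LatticeOrderedAddCommGroup

variable {α : Type*} [Lattice α] [AddCommGroup α] [IsOrderedAddMonoid α]

lemma inf_add_le_inf_add_inf {a b c : α} (ha : 0 ≤ a) (hb : 0 ≤ b) (hc : 0 ≤ c) :
    a ⊓ (b + c) ≤ a ⊓ b + a ⊓ c := by
  rw [add_inf, inf_add, inf_add]
  refine le_inf (le_inf ?_ ?_) (le_inf ?_ inf_le_right)
  · exact inf_le_left.trans (le_add_of_nonneg_left ha)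
  · exact inf_le_left.trans (le_add_of_nonneg_left hb)
  · exact inf_le_left.trans (le_add_of_nonneg_right hc)

lemma posPart_le_abs (a : α) : a⁺ ≤ |a| :=
  sup_le (le_abs_self a) (abs_nonneg a)

lemma inf_posPart_eq_zero_of_abs_inf_eq_zero {a z : α} (ha : 0 ≤ a) (hz : |z| ⊓ a = 0) :
    a ⊓ z⁺ = 0 :=
  le_antisymm (by rw [inf_comm, ← hz]; exact inf_le_inf_right a (posPart_le_abs z))
    (le_inf ha (posPart_nonneg z))

lemma inf_add_le_inf_posPart_of_abs_inf_eq_zero {a v z : α} (ha : 0 ≤ a) (hz : |z| ⊓ a = 0) :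
    a ⊓ (v + z) ≤ a ⊓ v⁺ :=
  calc a ⊓ (v + z) ≤ a ⊓ (v⁺ + z⁺) := inf_le_inf_left a (add_le_add (le_posPart v) (le_posPart z))
    _ ≤ a ⊓ v⁺ + a ⊓ z⁺ := inf_add_le_inf_add_inf ha (posPart_nonneg v) (posPart_nonneg z)
    _ = a ⊓ v⁺ := by rw [inf_posPart_eq_zero_of_abs_inf_eq_zero ha hz, add_zero]

end LatticeOrderedAddCommGroup

lemma HasSolidNorm.norm_le_norm_of_nonneg_of_le {α : Type*} [NormedAddCommGroup α] [Lattice α]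
    [HasSolidNorm α] [IsOrderedAddMonoid α] {a b : α} (ha : 0 ≤ a) (hab : a ≤ b) : ‖a‖ ≤ ‖b‖ :=
  norm_le_norm_of_abs_le_abs (by rwa [abs_of_nonneg ha, abs_of_nonneg (ha.trans hab)])

theorem unTendsto_of_unTendsto_in_projection_band_general
    {ι X : Type*} [NormedAddCommGroup X] [Lattice X] [HasSolidNorm X] [IsOrderedAddMonoid X] [NormedSpace ℝ X]
    (Y : Submodule ℝ X)
    (hsolid : ∀ x : X, ∀ y ∈ Y, |x| ≤ |y| → x ∈ Y)
    (hproj : ∀ x : X, ∃ y ∈ Y, ∃ z : X, x = y + z ∧ ∀ w ∈ Y, |z| ⊓ |w| = 0)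
    (l : Filter ι) (y : ι → X) (hy : ∀ i, y i ∈ Y)
    (h : ∀ v ∈ Y, 0 ≤ v → Tendsto (fun i => ‖|y i| ⊓ v‖) l (𝓝 0)) :
    UnTendsto y l 0 := by
  intro u hu
  obtain ⟨v, hvY, z, rfl, hz⟩ := hproj u
  have hv : v⁺ ∈ Y :=
    hsolid _ v hvY (by rw [abs_of_nonneg (posPart_nonneg v)]; exact posPart_le_abs v)
  refine squeeze_zero (fun _ => norm_nonneg _) (fun i => ?_) (h _ hv (posPart_nonneg v))
  rw [sub_zero]
  exact HasSolidNorm.norm_le_norm_of_nonneg_of_le (le_inf (abs_nonneg _) hu)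
    (inf_add_le_inf_posPart_of_abs_inf_eq_zero (abs_nonneg _) (hz _ (hy i)))

/-- If `Y` is a projection band in a normed lattice `X` (a solid, order-closed
subspace such that `X = Y ⊕ Y^d`) and a net in `Y` un-converges to `0` in `Y`,
then it un-converges to `0` in `X`. -/
theorem unTendsto_of_unTendsto_in_projection_band
    {ι X : Type*} [NormedAddCommGroup X] [Lattice X] [HasSolidNorm X] [IsOrderedAddMonoid X] [NormedSpace ℝ X]
    (Y : Submodule ℝ X)
    (hsolid : ∀ x : X, ∀ y ∈ Y, |x| ≤ |y| → x ∈ Y)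
    (hband : ∀ s : Set X, s ⊆ (Y : Set X) → ∀ x : X, IsLUB s x → x ∈ Y)
    (hproj : ∀ x : X, ∃ y ∈ Y, ∃ z : X, x = y + z ∧ ∀ w ∈ Y, |z| ⊓ |w| = 0)
    (l : Filter ι) (y : ι → X) (hy : ∀ i, y i ∈ Y)
    (h : ∀ v ∈ Y, 0 ≤ v → Tendsto (fun i => ‖|y i| ⊓ v‖) l (𝓝 0)) :
    UnTendsto y l 0 :=
  unTendsto_of_unTendsto_in_projection_band_general Y hsolid hproj l y hy h
end
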